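/- Let K be a field, R a unital amenable affine K-algebra with a fixed Følner exhaustion {W_n}, ω a nonprincipal ultrafilter on ℕ, and let rank denote the associated rank function on finitely generated left R-modules. If M is a submodule of a finitely generated R-module N such that M and N/M are also finitely generated, then rank(N) ≥ rank(M) + rank(N/M). -/

import Mathlib

open Filter Module

/-- `W·r`: the image of the finite dimensional subspace `W` under right multiplication
by `r`. -/
noncomputable def rightMulSubmodule (K : Type*) [Field K] {R : Type*} [Ring R] [Algebra K R]
    (W : Submodule K R) (r : R) : Submodule K R :=
  W.map (LinearMap.mulRight K r)

/-- A Følner exhaustion of a `K`-algebra `R`: an increasing sequence of finite dimensional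
subspaces exhausting `R` such that for every `r ∈ R`,
`dim (Wₙ·r + Wₙ) / dim Wₙ → 1`. -/
def FolnerExhaustion (K : Type*) [Field K] (R : Type*) [Ring R] [Algebra K R]
    (W : ℕ → Submodule K R) : Prop :=
  Monotone W ∧ (∀ n, FiniteDimensional K (W n)) ∧ (∀ x : R, ∃ n, x ∈ W n) ∧
    ∀ r : R,
      Tendsto (fun n => (finrank K ↥(rightMulSubmodule K (W n) r ⊔ W n) : ℝ) / finrank K (W n))
        atTop (nhds 1)

/-- An affine algebra is (left) amenable if it admits a Følner exhaustion. -/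
def AmenableAlgebra (K : Type*) [Field K] (R : Type*) [Ring R] [Algebra K R] : Prop :=
  ∃ W : ℕ → Submodule K R, FolnerExhaustion K R W


/-- The ultralimit of a real sequence along an ultrafilter `ω`: the limit of the sequence
along `ω` (for bounded sequences this limit exists and is unique). -/
noncomputable def ultralim (ω : Ultrafilter ℕ) (f : ℕ → ℝ) : ℝ :=
  limUnder (ω : Filter ℕ) f

/-- The sequence `n ↦ dim_K(Wₙx₁ + ⋯ + Wₙx_r) / dim_K(Wₙ)` attached to a family of elements
`x₁, …, x_r` of a left `R`-module `M`, where `Wₙ·x = {wx : w ∈ Wₙ}`. -/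
noncomputable def rankSeq (K : Type*) [Field K] (R : Type*) [Ring R] [Algebra K R]
    (W : ℕ → Submodule K R) {M : Type*} [AddCommGroup M] [Module K M] [Module R M]
    [IsScalarTower K R M] {r : ℕ} (x : Fin r → M) (n : ℕ) : ℝ :=
  (finrank K ↥(⨆ i, (W n).map ((LinearMap.toSpanSingleton R M (x i)).restrictScalars K)) : ℝ) /
    finrank K (W n)


section Ultra

lemma exists_tendsto_ultra (ω : Ultrafilter ℕ) (f : ℕ → ℝ) (C : ℝ)
    (hf : ∀ n, f n ∈ Set.Icc 0 C) :
    ∃ L ∈ Set.Icc (0:ℝ) C, Tendsto f ω (nhds L) := by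
  obtain ⟨L, hL, h⟩ := (isCompact_Icc (a := (0:ℝ)) (b := C)).ultrafilter_le_nhds (ω.map f)
    (by rw [le_principal_iff]; exact Filter.mem_map.mpr (Filter.univ_mem' hf))
  exact ⟨L, hL, h⟩

end Ultra

section Finrank
variable {K : Type*} [Field K] {V : Type*} [AddCommGroup V] [Module K V]

lemma finrank_biSup_le {ι : Type*} [Fintype ι] (s : Finset ι) (B : ι → Submodule K V)
    [∀ i, FiniteDimensional K (B i)] :
    finrank K ↥(⨆ i ∈ s, B i) ≤ ∑ i ∈ s, finrank K (B i) := by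
  classical
  induction s using Finset.induction_on with
  | empty => simp
  | insert _ _ h ih =>
    rw [Finset.iSup_insert, Finset.sum_insert h]
    exact le_trans (Submodule.finrank_add_le_finrank_add_finrank _ _) (by gcongr)

lemma finrank_iSup_le_sum {ι : Type*} [Fintype ι] (B : ι → Submodule K V)
    [∀ i, FiniteDimensional K (B i)] :
    finrank K ↥(⨆ i, B i) ≤ ∑ i, finrank K (B i) := by
  have : (⨆ i, B i) = ⨆ i ∈ Finset.univ, B i := by simp
  rw [this]
  exact finrank_biSup_le _ _

lemma finrank_sup_biSup_le {ι : Type*} [Fintype ι] (W0 : Submodule K V)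
    [FiniteDimensional K W0] (s : Finset ι) (H : ι → Submodule K V)
    [∀ i, FiniteDimensional K (H i)] (hH : ∀ i, W0 ≤ H i) :
    finrank K ↥(W0 ⊔ ⨆ i ∈ s, H i) + s.card * finrank K W0 ≤
      finrank K W0 + ∑ i ∈ s, finrank K (H i) := by
  classical
  induction s using Finset.induction_on with
  | empty =>
    rw [show (⨆ i ∈ (∅:Finset ι), H i) = ⊥ by simp, sup_bot_eq]
    simp
  | @insert a s h ih =>
    rw [Finset.iSup_insert, Finset.sum_insert h, Finset.card_insert_of_notMem h]
    set X := W0 ⊔ ⨆ i ∈ s, H i with hX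
    have hre : W0 ⊔ (H a ⊔ ⨆ i ∈ s, H i) = H a ⊔ X := by
      rw [hX]; rw [sup_left_comm]
    rw [hre]
    haveI : FiniteDimensional K ↥(H a ⊓ X) :=
      Submodule.finiteDimensional_of_le (inf_le_left : H a ⊓ X ≤ H a)
    have key : finrank K ↥(H a ⊔ X) + finrank K W0 ≤ finrank K (H a) + finrank K X := by
      calc finrank K ↥(H a ⊔ X) + finrank K W0
          ≤ finrank K ↥(H a ⊔ X) + finrank K ↥(H a ⊓ X) := by
            gcongr
            exact Submodule.finrank_mono (le_inf (hH a) le_sup_left)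
        _ = finrank K (H a) + finrank K X := Submodule.finrank_sup_add_finrank_inf_eq _ _
    have hm : (s.card + 1) * finrank K ↥W0 = s.card * finrank K ↥W0 + finrank K ↥W0 := by ring
    omega
end Finrank

section RankSeq
variable {K : Type*} [Field K] {R : Type*} [Ring R] [Algebra K R]
  {M : Type*} [AddCommGroup M] [Module K M] [Module R M] [IsScalarTower K R M]

lemma rankSeq_mem_Icc (W : ℕ → Submodule K R) (hWfd : ∀ n, FiniteDimensional K (W n))
    {r : ℕ} (x : Fin r → M) (n : ℕ) :
    rankSeq K R W x n ∈ Set.Icc (0:ℝ) r := by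
  haveI := hWfd n
  constructor
  · exact div_nonneg (Nat.cast_nonneg _) (Nat.cast_nonneg _)
  · have hnum : finrank K
        ↥(⨆ i, (W n).map ((LinearMap.toSpanSingleton R M (x i)).restrictScalars K))
        ≤ r * finrank K (W n) := by
      refine le_trans (finrank_iSup_le_sum _) ?_
      calc ∑ i : Fin r, finrank K ↥((W n).map ((LinearMap.toSpanSingleton R M (x i)).restrictScalars K))
          ≤ ∑ _i : Fin r, finrank K (W n) :=
            Finset.sum_le_sum fun i _ => Submodule.finrank_map_le _ _
        _ = r * finrank K (W n) := by simp [Finset.sum_const, mul_comm]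
    rw [rankSeq]
    rcases Nat.eq_zero_or_pos (finrank K (W n)) with h | h
    · rw [h]; simp
    · rw [div_le_iff₀ (by exact_mod_cast h)]
      exact_mod_cast le_trans (Nat.cast_le.mpr hnum) (by push_cast; ring_nf; exact le_refl _)

end RankSeq

section StepA
variable {K : Type*} [Field K] {R : Type*} [Ring R] [Algebra K R]
  {N : Type*} [AddCommGroup N] [Module K N] [Module R N] [IsScalarTower K R N]

lemma stepA (W0 : Submodule K R) [FiniteDimensional K W0]
    (M : Submodule R N) {a b : ℕ} (u : Fin a → M) (vt : Fin b → N)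
    (v : Fin b → N ⧸ M) (hvt : ∀ j, M.mkQ (vt j) = v j) :
    finrank K ↥(⨆ i, W0.map ((LinearMap.toSpanSingleton R M (u i)).restrictScalars K)) +
      finrank K ↥(⨆ j, W0.map ((LinearMap.toSpanSingleton R (N ⧸ M) (v j)).restrictScalars K)) ≤
      finrank K ↥(⨆ p, W0.map ((LinearMap.toSpanSingleton R N
        (Fin.append (fun i => (u i : N)) vt p)).restrictScalars K)) := by
  classical
  set y : Fin (a + b) → N := Fin.append (fun i => ((u i : N))) vt with hy
  set Y : Submodule K N :=
    ⨆ p, W0.map ((LinearMap.toSpanSingleton R N (y p)).restrictScalars K) with hYdef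
  set Su : Submodule K N :=
    ⨆ i, W0.map ((LinearMap.toSpanSingleton R N ((u i : N))).restrictScalars K) with hSudef
  set Tv : Submodule K N :=
    ⨆ j, W0.map ((LinearMap.toSpanSingleton R N (vt j)).restrictScalars K) with hTvdef
  set Qv : Submodule K (N ⧸ M) :=
    ⨆ j, W0.map ((LinearMap.toSpanSingleton R (N ⧸ M) (v j)).restrictScalars K) with hQvdef
  have hSuY : Su ≤ Y := by
    refine iSup_le fun i => ?_
    have h : ((u i : N)) = y (Fin.castAdd b i) := by simp [hy, Fin.append_left]
    rw [h]
    exact le_iSup (fun p => W0.map ((LinearMap.toSpanSingleton R N (y p)).restrictScalars K)) _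
  have hTvY : Tv ≤ Y := by
    refine iSup_le fun j => ?_
    have h : vt j = y (Fin.natAdd a j) := by simp [hy, Fin.append_right]
    rw [h]
    exact le_iSup (fun p => W0.map ((LinearMap.toSpanSingleton R N (y p)).restrictScalars K)) _
  have hSuM : Su ≤ M.restrictScalars K := by
    refine iSup_le fun i => ?_
    rw [Submodule.map_le_iff_le_comap]
    intro w _
    simp only [Submodule.mem_comap, LinearMap.coe_restrictScalars,
      LinearMap.toSpanSingleton_apply, Submodule.restrictScalars_mem]
    exact M.smul_mem w (u i).2
  -- identify finrank of the `M`-side supremum with `Su`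
  have h1 : finrank K
      ↥(⨆ i, W0.map ((LinearMap.toSpanSingleton R M (u i)).restrictScalars K)) =
      finrank K Su := by
    have hmap : (⨆ i, W0.map ((LinearMap.toSpanSingleton R M (u i)).restrictScalars K)).map
        (M.subtype.restrictScalars K) = Su := by
      rw [Submodule.map_iSup]
      congr 1; funext i
      rw [← Submodule.map_comp]
      have hc : (M.subtype.restrictScalars K) ∘ₗ
          ((LinearMap.toSpanSingleton R M (u i)).restrictScalars K) =
          (LinearMap.toSpanSingleton R N ((u i : N))).restrictScalars K := by
        ext w
        simp
      rw [hc]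
    rw [← hmap]
    exact (Submodule.equivMapOfInjective _
      (by rw [LinearMap.coe_restrictScalars]; exact M.injective_subtype) _).finrank_eq
  -- the quotient map as a `K`-linear map
  set π : N →ₗ[K] N ⧸ M := M.mkQ.restrictScalars K with hπ
  have hkerπ : LinearMap.ker π = M.restrictScalars K := by
    rw [hπ, LinearMap.ker_restrictScalars, Submodule.ker_mkQ]
  have hπT : Qv = Tv.map π := by
    rw [hTvdef, Submodule.map_iSup, hQvdef]
    congr 1; funext j
    rw [← Submodule.map_comp]
    congr 1
    ext w
    simp only [LinearMap.coe_comp, Function.comp_apply, LinearMap.coe_restrictScalars,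
      LinearMap.toSpanSingleton_apply, hπ]
    rw [← hvt j]
    simp
  -- rank–nullity on `Y`
  set g : ↥Y →ₗ[K] N ⧸ M := π.comp Y.subtype with hg
  have hrank : finrank K ↥Y = finrank K ↥(LinearMap.range g) + finrank K ↥(LinearMap.ker g) :=
    (LinearMap.finrank_range_add_finrank_ker g).symm
  have hrange : LinearMap.range g = Y.map π := by
    rw [hg, LinearMap.range_comp, Submodule.range_subtype]
  have hker : finrank K ↥(LinearMap.ker g) = finrank K ↥(Y ⊓ M.restrictScalars K) := by
    have h2 : (LinearMap.ker g).map Y.subtype = Y ⊓ M.restrictScalars K := by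
      rw [hg, LinearMap.ker_comp, hkerπ, Submodule.map_comap_subtype]
    rw [← h2]
    exact (Submodule.equivMapOfInjective _ (Y.injective_subtype) _).finrank_eq
  haveI : FiniteDimensional K ↥(Y ⊓ M.restrictScalars K) :=
    Submodule.finiteDimensional_of_le inf_le_left
  have hQle : finrank K Qv ≤ finrank K ↥(Y.map π) := by
    rw [hπT]
    exact Submodule.finrank_mono (Submodule.map_mono hTvY)
  have hSle : finrank K Su ≤ finrank K ↥(Y ⊓ M.restrictScalars K) :=
    Submodule.finrank_mono (le_inf hSuY hSuM)
  rw [h1]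
  rw [hrange, hker] at hrank
  omega
end StepA


theorem rank_superadditive' (K : Type*) [Field K] (R : Type*) [Ring R] [Algebra K R]
    (W : ℕ → Submodule K R)
    (hWfd : ∀ n, FiniteDimensional K (W n))
    (hWfol : ∀ r : R,
      Tendsto (fun n => (finrank K ↥(rightMulSubmodule K (W n) r ⊔ W n) : ℝ) / finrank K (W n))
        atTop (nhds 1))
    (ω : Ultrafilter ℕ) (hω : (ω : Filter ℕ) ≤ Filter.cofinite)
    (N : Type*) [AddCommGroup N] [Module K N] [Module R N] [IsScalarTower K R N]
    (M : Submodule R N) {a b c : ℕ}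
    (u : Fin a → M)
    (x : Fin c → N) (hx : Submodule.span R (Set.range x) = ⊤)
    (v : Fin b → N ⧸ M) :
    limUnder (ω : Filter ℕ) (rankSeq K R W u) + limUnder (ω : Filter ℕ) (rankSeq K R W v) ≤
      limUnder (ω : Filter ℕ) (rankSeq K R W x) := by
  classical
  haveI : ∀ n, FiniteDimensional K (W n) := hWfd
  have hωatTop : (ω : Filter ℕ) ≤ atTop := by rw [← Nat.cofinite_eq_atTop]; exact hω
  -- lifts of the generators of the quotient
  choose vt hvt using fun j => Submodule.Quotient.mk_surjective M (v j)
  set y : Fin (a + b) → N := Fin.append (fun i => ((u i : N))) vt with hy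
  -- ultralimits exist
  obtain ⟨Lu, _, hLu⟩ := exists_tendsto_ultra ω (rankSeq K R W u) a (rankSeq_mem_Icc W hWfd u)
  obtain ⟨Lv, _, hLv⟩ := exists_tendsto_ultra ω (rankSeq K R W v) b (rankSeq_mem_Icc W hWfd v)
  obtain ⟨Lx, _, hLx⟩ := exists_tendsto_ultra ω (rankSeq K R W x) c (rankSeq_mem_Icc W hWfd x)
  obtain ⟨Ly, _, hLy⟩ := exists_tendsto_ultra ω (rankSeq K R W y) (a + b)
    (by exact_mod_cast rankSeq_mem_Icc W hWfd y)
  rw [hLu.limUnder_eq, hLv.limUnder_eq, hLx.limUnder_eq]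
  -- Step A : Lu + Lv ≤ Ly
  have hA : ∀ n, rankSeq K R W u n + rankSeq K R W v n ≤ rankSeq K R W y n := by
    intro n
    haveI := hWfd n
    have h := stepA (W n) M u vt v (fun j => hvt j)
    rcases Nat.eq_zero_or_pos (finrank K (W n)) with h0 | h0
    · simp [rankSeq, h0]
    · have hd : (0:ℝ) < (finrank K (W n) : ℝ) := by exact_mod_cast h0
      rw [rankSeq, rankSeq, rankSeq, ← add_div]
      gcongr
      exact_mod_cast h
  have h2 : Lu + Lv ≤ Ly := le_of_tendsto_of_tendsto' (hLu.add hLv) hLy hA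
  -- Step B : Ly ≤ Lx
  have hxy : ∀ j, ∃ cf : Fin c → R, ∑ k, cf k • x k = y j := fun j =>
    (Submodule.mem_span_range_iff_exists_fun R).mp (by rw [hx]; trivial)
  choose rc hrc using hxy
  set ratio : (Fin (a + b) × Fin c) → ℕ → ℝ := fun p n =>
    (finrank K ↥(rightMulSubmodule K (W n) (rc p.1 p.2) ⊔ W n) : ℝ) / finrank K (W n) with hratio
  set err : ℕ → ℝ := fun n => ∑ p : Fin (a + b) × Fin c, (ratio p n - 1) with herrdef
  have herr : Tendsto err atTop (nhds 0) := by
    have h0 : (0:ℝ) = ∑ _p : Fin (a + b) × Fin c, (0:ℝ) := by simp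
    rw [herrdef, h0]
    refine tendsto_finset_sum _ fun p _ => ?_
    have h := (hWfol (rc p.1 p.2)).sub_const 1
    rw [hratio]
    simpa using h
  have hpos : ∀ᶠ n in atTop, 0 < finrank K (W n) := by
    have h12 : ∀ᶠ n in atTop, (1/2:ℝ) <
        (finrank K ↥(rightMulSubmodule K (W n) 1 ⊔ W n) : ℝ) / finrank K (W n) :=
      (hWfol 1).eventually (eventually_gt_nhds (by norm_num))
    filter_upwards [h12] with n hn
    by_contra h0
    push_neg at h0
    rw [Nat.le_zero] at h0
    rw [h0] at hn
    norm_num at hn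
  have hB : ∀ᶠ n in atTop, rankSeq K R W y n ≤ rankSeq K R W x n + (c:ℝ) * err n := by
    filter_upwards [hpos] with n hn
    haveI := hWfd n
    haveI : ∀ r : R, FiniteDimensional K (rightMulSubmodule K (W n) r) := fun r => by
      unfold rightMulSubmodule; infer_instance
    set H : (Fin (a + b) × Fin c) → Submodule K R := fun p =>
      rightMulSubmodule K (W n) (rc p.1 p.2) ⊔ W n with hH
    set D : Submodule K R := W n ⊔ ⨆ p, H p with hD
    have hWD : W n ≤ D := le_sup_left
    -- claim 1
    have hclaim1 : (⨆ p, (W n).map ((LinearMap.toSpanSingleton R N (y p)).restrictScalars K)) ≤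
        ⨆ k, D.map ((LinearMap.toSpanSingleton R N (x k)).restrictScalars K) := by
      refine iSup_le fun j => ?_
      rw [Submodule.map_le_iff_le_comap]
      intro w hw
      simp only [Submodule.mem_comap, LinearMap.coe_restrictScalars,
        LinearMap.toSpanSingleton_apply]
      rw [← hrc j, Finset.smul_sum]
      refine Submodule.sum_mem _ fun k _ => ?_
      rw [smul_smul]
      have hmem : w * rc j k ∈ D := by
        have h1 : w * rc j k ∈ rightMulSubmodule K (W n) (rc j k) := by
          rw [rightMulSubmodule, Submodule.mem_map]
          exact ⟨w, hw, rfl⟩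
        exact Submodule.mem_sup_right
          (Submodule.mem_iSup_of_mem (j, k) (Submodule.mem_sup_left h1))
      refine Submodule.mem_iSup_of_mem k ?_
      exact ⟨w * rc j k, hmem, rfl⟩
    -- complement
    set P : Submodule K ↥D := Submodule.comap D.subtype (W n) with hP
    obtain ⟨Q, hQ⟩ := P.exists_isCompl
    set E : Submodule K R := Q.map D.subtype with hE
    have hPmap : P.map D.subtype = W n := by
      rw [hP, Submodule.map_comap_subtype]
      exact inf_eq_right.mpr hWD
    have hsupE : W n ⊔ E = D := by
      rw [← hPmap, hE, ← Submodule.map_sup, hQ.codisjoint.eq_top, Submodule.map_top,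
        Submodule.range_subtype]
    have hfE : finrank K (W n) + finrank K E = finrank K D := by
      have h := Submodule.finrank_add_eq_of_isCompl hQ
      have e1 : finrank K P = finrank K (W n) := by
        rw [← hPmap]
        exact (Submodule.equivMapOfInjective _ D.injective_subtype _).finrank_eq
      have e2 : finrank K Q = finrank K E := by
        rw [hE]
        exact (Submodule.equivMapOfInjective _ D.injective_subtype _).finrank_eq
      rw [e1, e2] at h
      exact h
    haveI : FiniteDimensional K E := by
      rw [hE]; infer_instance
    -- claim 2
    have hclaim2 : finrank K
        ↥(⨆ k, D.map ((LinearMap.toSpanSingleton R N (x k)).restrictScalars K)) ≤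
        finrank K ↥(⨆ k, (W n).map ((LinearMap.toSpanSingleton R N (x k)).restrictScalars K)) +
          c * finrank K E := by
      have hle : (⨆ k, D.map ((LinearMap.toSpanSingleton R N (x k)).restrictScalars K)) ≤
          (⨆ k, (W n).map ((LinearMap.toSpanSingleton R N (x k)).restrictScalars K)) ⊔
          (⨆ k, E.map ((LinearMap.toSpanSingleton R N (x k)).restrictScalars K)) := by
        refine iSup_le fun k => ?_
        rw [← hsupE, Submodule.map_sup]
        exact sup_le_sup
          (le_iSup (fun k => (W n).map
            ((LinearMap.toSpanSingleton R N (x k)).restrictScalars K)) k)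
          (le_iSup (fun k => E.map
            ((LinearMap.toSpanSingleton R N (x k)).restrictScalars K)) k)
      refine le_trans (Submodule.finrank_mono hle) ?_
      refine le_trans (Submodule.finrank_add_le_finrank_add_finrank _ _) ?_
      gcongr
      refine le_trans (finrank_iSup_le_sum _) ?_
      calc ∑ k : Fin c, finrank K
            ↥(E.map ((LinearMap.toSpanSingleton R N (x k)).restrictScalars K))
          ≤ ∑ _k : Fin c, finrank K E :=
            Finset.sum_le_sum fun k _ => Submodule.finrank_map_le _ _
        _ = c * finrank K E := by simp [mul_comm]
    -- claim 3
    have hclaim3 : finrank K D + ((a + b) * c) * finrank K (W n) ≤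
        finrank K (W n) + ∑ p : Fin (a + b) × Fin c, finrank K (H p) := by
      have h := finrank_sup_biSup_le (W n) Finset.univ H (fun p => le_sup_right)
      have huniv : (⨆ p ∈ Finset.univ, H p) = ⨆ p, H p := by simp
      rw [huniv] at h
      simpa [Finset.card_univ, Fintype.card_prod] using h
    -- real arithmetic
    have hd : (0:ℝ) < (finrank K (W n) : ℝ) := by exact_mod_cast hn
    set d : ℝ := (finrank K (W n) : ℝ) with hdd
    have hnum : (finrank K
        ↥(⨆ p, (W n).map ((LinearMap.toSpanSingleton R N (y p)).restrictScalars K)) : ℝ) ≤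
        (finrank K
          ↥(⨆ k, (W n).map ((LinearMap.toSpanSingleton R N (x k)).restrictScalars K)) : ℝ) +
          c * finrank K E := by
      have := le_trans (Submodule.finrank_mono hclaim1) hclaim2
      exact_mod_cast this
    have herrd : err n * d = ∑ p : Fin (a + b) × Fin c, ((finrank K (H p) : ℝ) - d) := by
      rw [herrdef]
      rw [Finset.sum_mul]
      refine Finset.sum_congr rfl fun p _ => ?_
      rw [sub_mul, one_mul, hratio]
      congr 1
      exact div_mul_cancel₀ _ hd.ne'
    have hEerr : (finrank K E : ℝ) ≤ err n * d := by
      have hc3 : (finrank K D : ℝ) + (((a + b) * c : ℕ) : ℝ) * d ≤ d +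
          ∑ p : Fin (a + b) × Fin c, (finrank K (H p) : ℝ) := by
        rw [hdd]; push_cast; exact_mod_cast hclaim3
      have hfE' : d + (finrank K E : ℝ) = (finrank K D : ℝ) := by
        rw [hdd]; exact_mod_cast hfE
      have herrd2 : err n * d = (∑ p : Fin (a + b) × Fin c, (finrank K (H p) : ℝ)) -
          (((a + b) * c : ℕ) : ℝ) * d := by
        rw [herrd, Finset.sum_sub_distrib, Finset.sum_const, Finset.card_univ,
          Fintype.card_prod, nsmul_eq_mul]
        simp only [Fintype.card_fin]
        try push_cast
        try ring
      linarith [hc3, hfE']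
    rw [rankSeq, rankSeq, ← hdd, div_le_iff₀ hd, add_mul]
    have hxd : (finrank K
        ↥(⨆ k, (W n).map ((LinearMap.toSpanSingleton R N (x k)).restrictScalars K)) : ℝ) / d * d =
        (finrank K
        ↥(⨆ k, (W n).map ((LinearMap.toSpanSingleton R N (x k)).restrictScalars K)) : ℝ) :=
      div_mul_cancel₀ _ hd.ne'
    rw [hxd]
    have hcE : (c:ℝ) * (finrank K E : ℝ) ≤ (c:ℝ) * (err n * d) :=
      mul_le_mul_of_nonneg_left hEerr (Nat.cast_nonneg c)
    have hassoc : (c:ℝ) * (err n * d) = (c:ℝ) * err n * d := (mul_assoc _ _ _).symm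
    linarith [hnum, hcE]
  have h3 : Ly ≤ Lx := by
    have hten : Tendsto (fun n => rankSeq K R W x n + (c:ℝ) * err n) ω
        (nhds (Lx + (c:ℝ) * 0)) :=
      hLx.add (tendsto_const_nhds.mul (herr.mono_left hωatTop))
    have := le_of_tendsto_of_tendsto hLy hten (hB.filter_mono hωatTop)
    simpa using this
  linarith


/-- Subadditivity corollary: if `M` is a submodule of a finitely generated module `N` with
`M` and `N/M` finitely generated, then `rank N ≥ rank M + rank (N/M)`. -/
theorem rank_superadditive (K : Type*) [Field K] (R : Type*) [Ring R] [Algebra K R]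
    [Algebra.FiniteType K R]
    (W : ℕ → Submodule K R) (hW : FolnerExhaustion K R W)
    (ω : Ultrafilter ℕ) (hω : (ω : Filter ℕ) ≤ Filter.cofinite)
    (N : Type*) [AddCommGroup N] [Module K N] [Module R N] [IsScalarTower K R N]
    (M : Submodule R N) {a b c : ℕ}
    (u : Fin a → M) (hu : Submodule.span R (Set.range u) = ⊤)
    (x : Fin c → N) (hx : Submodule.span R (Set.range x) = ⊤)
    (v : Fin b → N ⧸ M) (hv : Submodule.span R (Set.range v) = ⊤) :
    ultralim ω (rankSeq K R W u) + ultralim ω (rankSeq K R W v) ≤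
      ultralim ω (rankSeq K R W x) := by
  obtain ⟨hmono, hfd, hexh, hfol⟩ := hW
  exact rank_superadditive' K R W hfd hfol ω hω N M u x hx v
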